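/- Let ω, ω' ∈ 𝕊² (the unit sphere of ℝ³) with −1 < ω·ω' < 1, and define the unit tangent vectors e := (ω' − (ω·ω')ω)/√(1 − (ω·ω')²) and e' := (ω − (ω·ω')ω')/√(1 − (ω·ω')²). Then e + e' = ((1 − ω·ω')/√(1 − (ω·ω')²)) (ω + ω'), and consequently |e + e'| = |ω − ω'|. -/

import Mathlib

/-!
Write `c = ω·ω'` and `s = √(1 - c²)`. Collecting terms, `s (e + e') = (1 - c)(ω + ω')`, which is the
first claim. For unit vectors `|ω ± ω'|² = 2(1 ± c)`, so
`|e + e'|² = (1 - c)² · 2(1 + c) / (1 - c²) = 2(1 - c) = |ω - ω'|²`.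
-/

open MeasureTheory

noncomputable section

abbrev E3 : Type := EuclideanSpace ℝ (Fin 3)

open scoped InnerProductSpace

section UnitVectors

variable {V : Type*} [NormedAddCommGroup V] [InnerProductSpace ℝ V] {u v : V}

theorem norm_add_sq_of_norm_eq_one (hu : ‖u‖ = 1) (hv : ‖v‖ = 1) :
    ‖u + v‖ ^ 2 = 2 * (1 + ⟪u, v⟫_ℝ) := by
  rw [norm_add_sq_real, hu, hv]; ring

theorem norm_sub_sq_of_norm_eq_one (hu : ‖u‖ = 1) (hv : ‖v‖ = 1) :
    ‖u - v‖ ^ 2 = 2 * (1 - ⟪u, v⟫_ℝ) := by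
  rw [norm_sub_sq_real, hu, hv]; ring

theorem div_sqrt_one_sub_inner_sq_mul_norm_add (hu : ‖u‖ = 1) (hv : ‖v‖ = 1)
    (h₁ : -1 < ⟪u, v⟫_ℝ) (h₂ : ⟪u, v⟫_ℝ < 1) :
    (1 - ⟪u, v⟫_ℝ) / √(1 - ⟪u, v⟫_ℝ ^ 2) * ‖u + v‖ = ‖u - v‖ := by
  have hc : 0 < 1 - ⟪u, v⟫_ℝ ^ 2 := by nlinarith
  have hlhs : 0 ≤ (1 - ⟪u, v⟫_ℝ) / √(1 - ⟪u, v⟫_ℝ ^ 2) * ‖u + v‖ := by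
    have : 0 ≤ 1 - ⟪u, v⟫_ℝ := by linarith
    positivity
  refine (pow_left_inj₀ hlhs (norm_nonneg _) two_ne_zero).mp ?_
  rw [mul_pow, div_pow, Real.sq_sqrt hc.le, norm_add_sq_of_norm_eq_one hu hv,
    norm_sub_sq_of_norm_eq_one hu hv]
  field_simp
  ring

end UnitVectors

theorem smul_sub_smul_add_smul_sub_smul {R M : Type*} [CommRing R] [AddCommGroup M]
    [Module R M] (s c : R) (u v : M) :
    s • (v - c • u) + s • (u - c • v) = (s * (1 - c)) • (u + v) := by
  module

/-- the exact cancellation `e + e' = ((1 − ω·ω')/√(1 − (ω·ω')²)) (ω + ω')`, and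
hence `|e + e'| = |ω − ω'|`, for the unit tangent vectors `e`, `e'` associated to two
directions `ω, ω'` on the unit sphere. -/
theorem stmt16 (ω ω' : E3) (hω : ‖ω‖ = 1) (hω' : ‖ω'‖ = 1)
    (h₁ : -1 < (inner ℝ ω ω' : ℝ)) (h₂ : (inner ℝ ω ω' : ℝ) < 1)
    (e e' : E3)
    (he : e = (Real.sqrt (1 - (inner ℝ ω ω' : ℝ) ^ 2))⁻¹ • (ω' - (inner ℝ ω ω' : ℝ) • ω))
    (he' : e' = (Real.sqrt (1 - (inner ℝ ω ω' : ℝ) ^ 2))⁻¹ • (ω - (inner ℝ ω ω' : ℝ) • ω')) :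
    e + e' = ((1 - (inner ℝ ω ω' : ℝ)) / Real.sqrt (1 - (inner ℝ ω ω' : ℝ) ^ 2)) • (ω + ω') ∧
      ‖e + e'‖ = ‖ω - ω'‖ := by
  have hsum : e + e' = ((1 - ⟪ω, ω'⟫_ℝ) / √(1 - ⟪ω, ω'⟫_ℝ ^ 2)) • (ω + ω') := by
    rw [he, he', smul_sub_smul_add_smul_sub_smul, inv_mul_eq_div]
  have hcoeff : 0 ≤ (1 - ⟪ω, ω'⟫_ℝ) / √(1 - ⟪ω, ω'⟫_ℝ ^ 2) :=
    div_nonneg (by linarith) (Real.sqrt_nonneg _)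
  refine ⟨hsum, ?_⟩
  rw [hsum, norm_smul, Real.norm_of_nonneg hcoeff,
    div_sqrt_one_sub_inner_sq_mul_norm_add hω hω' h₁ h₂]

end
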